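/- Let G be a group, H, K ≤ G, and let Conhom(H,K) be the set of group homomorphisms φ : H → K which are given by conjugation by some element g ∈ G (i.e., φ(h) = ghg⁻¹ for all h ∈ H, with gHg⁻¹ ⊆ K). Then the quotient of Conhom(H,K) by the post-composition action of the inner automorphism group Inn(K) is in bijection with the quotient of the set of G-equivariant maps G/H → G/K by the action of the centralizer C_G(H), where c ∈ C_G(H) acts by precomposition with right multiplication by c⁻¹. -/
import Mathlib

namespace Stmt8Aux

variable {G : Type} [Group G] (H K : Subgroup G)

/-- The equivariant map `xH ↦ x g⁻¹ K` associated to a conjugation witness `g`. -/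
noncomputable def fmap (g : G) (hg : ∀ h : H, g * h * g⁻¹ ∈ K) :
    {f : G ⧸ H → G ⧸ K // ∀ (x : G) (p : G ⧸ H), f (x • p) = x • f p} := by
  refine ⟨fun p => Quotient.liftOn' p (fun x => ((x * g⁻¹ : G) : G ⧸ K)) ?_, ?_⟩
  · intro x y hxy
    rw [QuotientGroup.leftRel_apply] at hxy
    refine (QuotientGroup.eq).2 ?_
    have h2 : (x * g⁻¹)⁻¹ * (y * g⁻¹) = g * (x⁻¹ * y) * g⁻¹ := by group
    rw [h2]
    exact hg ⟨x⁻¹ * y, hxy⟩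
  · intro x p
    induction p using QuotientGroup.induction_on with
    | H y =>
      show ((x * y * g⁻¹ : G) : G ⧸ K) = x • ((y * g⁻¹ : G) : G ⧸ K)
      rw [mul_assoc]
      rfl

lemma fmap_mk (g : G) (hg : ∀ h : H, g * h * g⁻¹ ∈ K) (x : G) :
    (fmap H K g hg).1 (↑x : G ⧸ H) = ((x * g⁻¹ : G) : G ⧸ K) := rfl

/-- Forward map on representatives. -/
noncomputable def Fsub (φ : {φ : H → K // ∃ g : G, ∀ h : H, ((φ h : G)) = g * h * g⁻¹}) :
    {f : G ⧸ H → G ⧸ K // ∀ (x : G) (p : G ⧸ H), f (x • p) = x • f p} :=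
  fmap H K φ.2.choose (fun h => by rw [← φ.2.choose_spec h]; exact (φ.1 h).2)

/-- A representative in `G` of `f(1·H) ∈ G/K`. -/
noncomputable def bElt (f : {f : G ⧸ H → G ⧸ K // ∀ (x : G) (p : G ⧸ H), f (x • p) = x • f p}) :
    G :=
  (QuotientGroup.mk_surjective (f.1 ((1 : G) : G ⧸ H))).choose

lemma bElt_spec (f : {f : G ⧸ H → G ⧸ K // ∀ (x : G) (p : G ⧸ H), f (x • p) = x • f p}) :
    ((bElt H K f : G) : G ⧸ K) = f.1 ((1 : G) : G ⧸ H) :=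
  (QuotientGroup.mk_surjective (f.1 ((1 : G) : G ⧸ H))).choose_spec

lemma f_mk (f : {f : G ⧸ H → G ⧸ K // ∀ (x : G) (p : G ⧸ H), f (x • p) = x • f p}) (x : G) :
    f.1 ((x : G) : G ⧸ H) = ((x * bElt H K f : G) : G ⧸ K) := by
  have e1 : ((x : G) : G ⧸ H) = x • ((1 : G) : G ⧸ H) := by
    show _ = ((x * 1 : G) : G ⧸ H); rw [mul_one]
  rw [e1, f.2, ← bElt_spec]
  rfl

lemma bMem (f : {f : G ⧸ H → G ⧸ K // ∀ (x : G) (p : G ⧸ H), f (x • p) = x • f p}) (h : H) :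
    (bElt H K f)⁻¹ * h * bElt H K f ∈ K := by
  have h1 : (((h : G)) : G ⧸ H) = ((1 : G) : G ⧸ H) := by
    refine (QuotientGroup.eq).2 ?_
    simpa using H.inv_mem h.2
  have h2 := f_mk H K f (h : G)
  rw [h1, ← bElt_spec] at h2
  have h3 := (QuotientGroup.eq).1 h2
  have e : (bElt H K f)⁻¹ * ((h : G) * bElt H K f) = (bElt H K f)⁻¹ * h * bElt H K f := by group
  rw [e] at h3
  exact h3

/-- Backward map on representatives. -/
noncomputable def Bsub (f : {f : G ⧸ H → G ⧸ K // ∀ (x : G) (p : G ⧸ H), f (x • p) = x • f p}) :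
    {φ : H → K // ∃ g : G, ∀ h : H, ((φ h : G)) = g * h * g⁻¹} :=
  ⟨fun h => ⟨(bElt H K f)⁻¹ * h * bElt H K f, bMem H K f h⟩,
   (bElt H K f)⁻¹, fun h => by rw [inv_inv]⟩

end Stmt8Aux

/-- The quotient of `Conhom(H,K)` (homomorphisms `H → K` given by conjugation by an
element of `G`) by post-composition with inner automorphisms of `K` is in bijection
with the quotient of the set of `G`-equivariant maps `G/H → G/K` by the action of the
centralizer `C_G(H)`, where `c ∈ C_G(H)` acts by precomposition with right
multiplication by `c⁻¹`. -/
theorem stmt8 {G : Type} [Group G] (H K : Subgroup G) :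
    Nonempty
      (Quot (fun (φ ψ : {φ : H → K // ∃ g : G, ∀ h : H, ((φ h : G)) = g * h * g⁻¹}) =>
          ∃ k : K, ∀ h : H, ((ψ.1 h : G)) = k * (φ.1 h : G) * (k : G)⁻¹) ≃
       Quot (fun (f f' : {f : G ⧸ H → G ⧸ K //
            ∀ (x : G) (p : G ⧸ H), f (x • p) = x • f p}) =>
          ∃ c ∈ Subgroup.centralizer (H : Set G),
            ∀ g' : G, f'.1 (g' : G ⧸ H) = f.1 ((g' * c⁻¹ : G) : G ⧸ H))) := by
  classical
  refine ⟨⟨Quot.lift (fun φ => Quot.mk _ (Stmt8Aux.Fsub H K φ)) ?_,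
          Quot.lift (fun f => Quot.mk _ (Stmt8Aux.Bsub H K f)) ?_, ?_, ?_⟩⟩
  · -- F respects the relation
    rintro φ ψ ⟨k, hk⟩
    have gspec := φ.2.choose_spec
    have gspec' := ψ.2.choose_spec
    set g := φ.2.choose with hgdef
    set g' := ψ.2.choose with hg'def
    refine Quot.sound ⟨g⁻¹ * (k : G)⁻¹ * g', ?_, ?_⟩
    · rw [Subgroup.mem_centralizer_iff]
      intro h hh
      have eq1 : g' * h * g'⁻¹ = (k : G) * (g * h * g⁻¹) * (k : G)⁻¹ := by
        rw [← gspec ⟨h, hh⟩, ← gspec' ⟨h, hh⟩]; exact hk ⟨h, hh⟩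
      calc h * (g⁻¹ * (k : G)⁻¹ * g')
          = g⁻¹ * (k : G)⁻¹ * ((k : G) * (g * h * g⁻¹) * (k : G)⁻¹) * g' := by group
        _ = g⁻¹ * (k : G)⁻¹ * (g' * h * g'⁻¹) * g' := by rw [eq1]
        _ = (g⁻¹ * (k : G)⁻¹ * g') * h := by group
    · intro x
      show ((x * g'⁻¹ : G) : G ⧸ K) = ((x * (g⁻¹ * (k : G)⁻¹ * g')⁻¹ * g⁻¹ : G) : G ⧸ K)
      refine (QuotientGroup.eq).2 ?_
      have e : (x * g'⁻¹)⁻¹ * (x * (g⁻¹ * (k : G)⁻¹ * g')⁻¹ * g⁻¹) = (k : G) := by group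
      rw [e]; exact k.2
  · -- B respects the relation
    rintro f f' ⟨c, hc, hrel⟩
    set a := Stmt8Aux.bElt H K f with ha
    set a' := Stmt8Aux.bElt H K f' with ha'
    have spec' : ((a' : G) : G ⧸ K) = ((c⁻¹ * a : G) : G ⧸ K) := by
      rw [ha', Stmt8Aux.bElt_spec]
      have e1 : ((1 : G) : G ⧸ H) = (((1 : G) * 1 : G) : G ⧸ H) := by rw [one_mul]
      rw [show f'.1 ((1 : G) : G ⧸ H) = f.1 (((1 : G) * c⁻¹ : G) : G ⧸ H) from hrel 1]
      rw [one_mul, Stmt8Aux.f_mk]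
    have hk0 : a'⁻¹ * (c⁻¹ * a) ∈ K := (QuotientGroup.eq).1 spec'
    refine Quot.sound ⟨⟨a'⁻¹ * (c⁻¹ * a), hk0⟩, ?_⟩
    intro h
    have hcomm : (h : G) * c = c * (h : G) := Subgroup.mem_centralizer_iff.1 hc (h : G) h.2
    have e2 : c⁻¹ * (h : G) * c = (h : G) := by
      rw [mul_assoc, hcomm]; group
    show a'⁻¹ * (h : G) * a'
        = (a'⁻¹ * (c⁻¹ * a)) * (a⁻¹ * (h : G) * a) * (a'⁻¹ * (c⁻¹ * a))⁻¹
    calc a'⁻¹ * (h : G) * a' = a'⁻¹ * (c⁻¹ * (h : G) * c) * a' := by rw [e2]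
      _ = (a'⁻¹ * (c⁻¹ * a)) * (a⁻¹ * (h : G) * a) * (a'⁻¹ * (c⁻¹ * a))⁻¹ := by group
  · -- B ∘ F = id
    refine Quot.ind ?_
    intro φ
    have gspec := φ.2.choose_spec
    set g := φ.2.choose with hgdef
    show Quot.mk _ (Stmt8Aux.Bsub H K (Stmt8Aux.Fsub H K φ)) = Quot.mk _ φ
    set a := Stmt8Aux.bElt H K (Stmt8Aux.Fsub H K φ) with ha
    have spec : ((a : G) : G ⧸ K) = (((1 : G) * g⁻¹ : G) : G ⧸ K) := by
      rw [ha, Stmt8Aux.bElt_spec]; rfl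
    have hk0 : a⁻¹ * ((1 : G) * g⁻¹) ∈ K := (QuotientGroup.eq).1 spec
    have hk0' : a⁻¹ * g⁻¹ ∈ K := by
      have e : a⁻¹ * ((1 : G) * g⁻¹) = a⁻¹ * g⁻¹ := by group
      rwa [e] at hk0
    refine Quot.sound ⟨(⟨a⁻¹ * g⁻¹, hk0'⟩ : K)⁻¹, ?_⟩
    intro h
    show (φ.1 h : G) = (a⁻¹ * g⁻¹)⁻¹ * (a⁻¹ * (h : G) * a) * ((a⁻¹ * g⁻¹)⁻¹)⁻¹
    rw [gspec h]
    group
  · -- F ∘ B = id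
    refine Quot.ind ?_
    intro f
    show Quot.mk _ (Stmt8Aux.Fsub H K (Stmt8Aux.Bsub H K f)) = Quot.mk _ f
    have gspec := (Stmt8Aux.Bsub H K f).2.choose_spec
    set g := (Stmt8Aux.Bsub H K f).2.choose with hgdef
    set a := Stmt8Aux.bElt H K f with ha
    have gspec' : ∀ h : H, a⁻¹ * (h : G) * a = g * h * g⁻¹ := fun h => gspec h
    refine Quot.sound ⟨g⁻¹ * a⁻¹, ?_, ?_⟩
    · rw [Subgroup.mem_centralizer_iff]
      intro h hh
      calc h * (g⁻¹ * a⁻¹) = g⁻¹ * (g * h * g⁻¹) * a⁻¹ := by group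
        _ = g⁻¹ * (a⁻¹ * h * a) * a⁻¹ := by rw [← gspec' ⟨h, hh⟩]
        _ = (g⁻¹ * a⁻¹) * h := by group
    · intro x
      rw [Stmt8Aux.f_mk]
      show ((x * a : G) : G ⧸ K) = ((x * (g⁻¹ * a⁻¹)⁻¹ * g⁻¹ : G) : G ⧸ K)
      refine (QuotientGroup.eq).2 ?_
      have e : (x * a)⁻¹ * (x * (g⁻¹ * a⁻¹)⁻¹ * g⁻¹) = 1 := by group
      rw [e]; exact K.one_mem
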